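/- arXiv:2002.05649 — 4 statements merged into one kernel-verified Lean document; each statement's English description precedes it below -/
import Mathlib

section
/- If an improving bisimulation R on two deterministic transition systems S and Q relates states s and q, and s is terminating (reaches a final state in finitely many steps), then q is terminating. -/
/-- A deterministic transition system: a set of states with a partial
transition function. -/
structure DTS (S : Type*) where
  tr : S → Option S

namespace DTS

variable {S Q : Type*}

/-- One-step transition: `s → s'` when `tr s = some s'`. -/
def Step (M : DTS S) (s s' : S) : Prop := M.tr s = some s'

/-- A state is final when the transition function is undefined on it. -/
def Final (M : DTS S) (s : S) : Prop := M.tr s = none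

/-- `n`-fold iteration of the transition relation. -/
def StepN (M : DTS S) : ℕ → S → S → Prop
  | 0, s, s' => s = s'
  | n + 1, s, s'' => ∃ s', M.Step s s' ∧ M.StepN n s' s''

/-- A state is terminating if it reaches a final state in finitely many steps. -/
def Terminating (M : DTS S) (s : S) : Prop :=
  ∃ (n : ℕ) (s' : S), M.StepN n s s' ∧ M.Final s'

/-- The evaluation length of a state: the number of steps to reach a final
state, or `∞` if there is none. -/
noncomputable def len (M : DTS S) (s : S) : ℕ∞ :=
  sInf {e : ℕ∞ | ∃ n : ℕ, e = (n : ℕ∞) ∧ ∃ s', M.StepN n s s' ∧ M.Final s'}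

/-- Improving bisimulations (improvements) between two DTSs. -/
structure Improvement (M : DTS S) (N : DTS Q) (R : S → Q → Prop) : Prop where
  finalL : ∀ s q, R s q → M.Final s → N.Final q
  finalR : ∀ s q, R s q → N.Final q → ∃ (n : ℕ) (s' : S), M.StepN n s s' ∧ M.Final s'
  transL : ∀ s q s', R s q → M.Step s s' →
    ∃ (s'' : S) (q' : Q) (n m : ℕ), M.StepN m s' s'' ∧ N.StepN n q q' ∧ R s'' q' ∧ n ≤ m + 1
  transR : ∀ s q q', R s q → N.Step q q' →
    ∃ (s' : S) (q'' : Q) (n m : ℕ), M.StepN m s s' ∧ N.StepN n q' q'' ∧ R s' q'' ∧ n + 1 ≤ m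

end DTS


namespace DTS

variable {S Q : Type*}

theorem stepN_comp (M : DTS S) : ∀ (n m : ℕ) (a b c : S),
    M.StepN n a b → M.StepN m b c → M.StepN (n + m) a c := by
  intro n
  induction n with
  | zero => intro m a b c hab hbc; cases hab; simpa using hbc
  | succ k ih =>
      rintro m a b c ⟨a', ha, hab⟩ hbc
      rw [Nat.succ_add]
      exact ⟨a', ha, ih m a' b c hab hbc⟩

theorem stepN_split (M : DTS S) : ∀ (m n : ℕ) (s f b : S),
    M.StepN n s f → M.Final f → M.StepN m s b → ∃ k, k + m = n ∧ M.StepN k b f := by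
  intro m
  induction m with
  | zero => intro n s f b h hf hb; cases hb; exact ⟨n, rfl, h⟩
  | succ j ih =>
      rintro n s f b h hf ⟨s', hs', hb⟩
      cases n with
      | zero =>
          cases h
          exact absurd hf (by simp [Final, Step, hs'] at hs' ⊢; simp [hs'])
      | succ n' =>
          obtain ⟨s'', hs'', h'⟩ := h
          have : s' = s'' := by
            have := hs'.symm.trans hs''
            exact Option.some.inj this
          subst this
          obtain ⟨k, hk, hkf⟩ := ih n' s' f b h' hf hb
          exact ⟨k, by omega, hkf⟩

theorem aux_term {M : DTS S} {N : DTS Q} {R : S → Q → Prop}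
    (hR : DTS.Improvement M N R) :
    ∀ n : ℕ, ∀ s q f, R s q → M.StepN n s f → M.Final f → N.Terminating q := by
  intro n
  induction n using Nat.strong_induction_on with
  | _ n ih =>
      intro s q f hsq hsf hf
      cases hMs : M.tr s with
      | none =>
          exact ⟨0, q, rfl, hR.finalL s q hsq hMs⟩
      | some s₁ =>
          cases n with
          | zero => cases hsf; exact absurd hf (by simp [Final, hMs])
          | succ n' =>
              obtain ⟨s₁', hstep, hsf'⟩ := hsf
              have : s₁ = s₁' := Option.some.inj (hMs.symm.trans hstep)
              subst this
              obtain ⟨s'', q', nq, m, hms, hnq, hR', hle⟩ :=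
                hR.transL s q s₁ hsq hMs
              obtain ⟨k, hk, hkf⟩ := stepN_split M m n' s₁ f s'' hsf' hf hms
              have hklt : k < n' + 1 := by omega
              obtain ⟨j, q'', hjq, hqf⟩ := ih k hklt s'' q' f hR' hkf hf
              exact ⟨nq + j, q'', stepN_comp N nq j q q' q'' hnq hjq, hqf⟩

end DTS

/-- if an improvement relates `s` and `q` and `s` is terminating,
then `q` is terminating. -/
theorem improvement_terminating_left_to_right {S Q : Type*}
    (M : DTS S) (N : DTS Q) (R : S → Q → Prop)
    (hR : DTS.Improvement M N R) (s : S) (q : Q) (hsq : R s q)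
    (hs : M.Terminating s) : N.Terminating q := by
  obtain ⟨n, f, hsf, hf⟩ := hs
  exact DTS.aux_term hR n s q f hsq hsf hf
end

section
/- If an improving bisimulation R on two deterministic transition systems relates states s and q, and q is terminating, then s is terminating. -/
lemma DTS.stepN_trans {S : Type*} (M : DTS S) :
    ∀ (m n : ℕ) (s s' s'' : S), M.StepN m s s' → M.StepN n s' s'' →
      M.StepN (m + n) s s'' := by
  intro m
  induction m with
  | zero => intro n s s' s'' h1 h2; cases h1; simpa using h2
  | succ k ih =>
    rintro n s s' s'' ⟨t, hst, hts'⟩ h2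
    have hk : k + 1 + n = (k + n) + 1 := by omega
    rw [hk]
    exact ⟨t, hst, ih n t s' s'' hts' h2⟩

lemma DTS.stepN_det {S : Type*} (M : DTS S) :
    ∀ (n : ℕ) (a c : S), M.StepN n a c → ∀ (k : ℕ) (b : S), M.StepN k a b →
      M.Final b → ∃ j, n + j = k ∧ M.StepN j c b := by
  intro n
  induction n with
  | zero => intro a c h k b h2 _; cases h; exact ⟨k, by simp, h2⟩
  | succ m ih =>
    rintro a c ⟨a1, ha1, hrest⟩ k b h2 hb
    cases k with
    | zero =>
      cases h2
      unfold DTS.Final at hb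
      unfold DTS.Step at ha1
      rw [hb] at ha1
      simp at ha1
    | succ k' =>
      obtain ⟨a1', ha1', hrest'⟩ := h2
      have : a1' = a1 := by
        have h := ha1'.symm.trans ha1
        simpa using h
      subst this
      obtain ⟨j, hj, hjs⟩ := ih a1' c hrest k' b hrest' hb
      exact ⟨j, by omega, hjs⟩

/-- if an improvement relates `s` and `q` and `q` is terminating,
then `s` is terminating. -/
theorem improvement_terminating_right_to_left {S Q : Type*}
    (M : DTS S) (N : DTS Q) (R : S → Q → Prop)
    (hR : DTS.Improvement M N R) (s : S) (q : Q) (hsq : R s q)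
    (hq : N.Terminating q) : M.Terminating s := by
  obtain ⟨k, qf, hkq, hqf⟩ := hq
  have key : ∀ k : ℕ, ∀ (s : S) (q : Q), R s q → N.StepN k q qf → M.Terminating s := by
    intro k
    induction k using Nat.strong_induction_on with
    | _ k ih =>
      intro s q hsq hkq
      cases k with
      | zero =>
        cases hkq
        exact hR.finalR _ _ hsq hqf
      | succ k' =>
        obtain ⟨q1, hq1, hrest⟩ := hkq
        obtain ⟨s', q'', n, m, hss', hq1q'', hR', hnm⟩ := hR.transR s q q1 hsq hq1
        obtain ⟨j, hj, hjs⟩ := N.stepN_det n q1 q'' hq1q'' k' qf hrest hqf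
        have hjlt : j < k' + 1 := by omega
        obtain ⟨n2, sf, hs'f, hsf⟩ := ih j hjlt s' q'' hR' hjs
        exact ⟨m + n2, sf, M.stepN_trans m n2 s s' sf hss' hs'f, hsf⟩
  exact key k s q hsq hkq
end

section
/- Let R be an improving bisimulation between two deterministic transition systems and suppose s R q. Define |s| as the number of transition steps from s to a final state (and ∞ if s diverges), similarly |q|. Then |s| ≥ |q| (in ℕ∪{∞} with the convention that ∞ is the top element). -/
namespace DTS

variable {S Q : Type*}

/-- Determinism: if `s` reaches a final state in `n` steps and also makes `m`
steps to `t`, then `m ≤ n` and `t` reaches the final state in `n - m` steps. -/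
lemma stepN_det_s2 (M : DTS S) : ∀ (m n : ℕ) (s t f : S),
    M.StepN n s f → M.Final f → M.StepN m s t →
    m ≤ n ∧ M.StepN (n - m) t f := by
  intro m
  induction m with
  | zero =>
    intro n s t f hn hf ht
    cases ht
    exact ⟨Nat.zero_le _, hn⟩
  | succ m ih =>
    intro n s t f hn hf ht
    obtain ⟨s₁, hs₁, ht'⟩ := ht
    cases n with
    | zero =>
      cases hn
      unfold Step at hs₁
      rw [hf] at hs₁
      cases hs₁
    | succ n =>
      obtain ⟨s₁', hs₁', hn'⟩ := hn
      have : s₁ = s₁' := by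
        simp [Step] at hs₁ hs₁'
        rw [hs₁] at hs₁'; exact Option.some.inj hs₁'
      subst this
      obtain ⟨h1, h2⟩ := ih n s₁ t f hn' hf ht'
      exact ⟨Nat.succ_le_succ h1, by simpa [Nat.succ_sub h1] using h2⟩

lemma stepN_trans_s2 (M : DTS S) : ∀ (m n : ℕ) (s t u : S),
    M.StepN m s t → M.StepN n t u → M.StepN (m + n) s u := by
  intro m
  induction m with
  | zero => intro n s t u h1 h2; cases h1; simpa using h2
  | succ m ih =>
    intro n s t u h1 h2
    obtain ⟨s₁, hs₁, h1'⟩ := h1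
    have h : m + 1 + n = (m + n) + 1 := by omega
    rw [h]
    exact ⟨s₁, hs₁, ih n s₁ t u h1' h2⟩

lemma key {M : DTS S} {N : DTS Q} {R : S → Q → Prop}
    (hR : Improvement M N R) :
    ∀ (n : ℕ) (s : S) (q : Q), R s q →
      (∃ f, M.StepN n s f ∧ M.Final f) →
      ∃ (m : ℕ) (g : Q), m ≤ n ∧ N.StepN m q g ∧ N.Final g := by
  intro n
  induction n using Nat.strong_induction_on with
  | _ n ih =>
    intro s q hsq ⟨f, hsf, hf⟩
    cases n with
    | zero =>
      cases hsf
      exact ⟨0, q, le_refl _, rfl, hR.finalL _ _ hsq hf⟩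
    | succ n =>
      obtain ⟨s₁, hs₁, hsf'⟩ := hsf
      obtain ⟨s'', q', k, m, hm, hk, hR', hkm⟩ := hR.transL s q s₁ hsq hs₁
      obtain ⟨hmn, hrest⟩ := M.stepN_det_s2 m n s₁ s'' f hsf' hf hm
      have hlt : n - m < n + 1 := Nat.lt_succ_of_le (Nat.sub_le _ _)
      obtain ⟨m', g, hm', hqg, hg⟩ := ih (n - m) hlt s'' q' hR' ⟨f, hrest, hf⟩
      refine ⟨k + m', g, ?_, N.stepN_trans_s2 k m' q q' g hk hqg, hg⟩
      omega

end DTS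

/-- along an improvement, evaluation lengths do not increase:
`|q| ≤ |s|` in `ℕ∪{∞}`. -/
theorem improvement_len_le {S Q : Type*}
    (M : DTS S) (N : DTS Q) (R : S → Q → Prop)
    (hR : DTS.Improvement M N R) (s : S) (q : Q) (hsq : R s q) :
    N.len q ≤ M.len s := by
  apply le_sInf
  rintro e ⟨n, rfl, s', hs', hfin⟩
  obtain ⟨m, g, hmn, hqg, hg⟩ := DTS.key hR n s q hsq ⟨s', hs', hfin⟩
  calc N.len q ≤ (m : ℕ∞) := sInf_le ⟨m, rfl, g, hqg, hg⟩
    _ ≤ (n : ℕ∞) := by exact_mod_cast hmn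
end

section
/- Strict decrease implies divergence detection: let (t_i)_{i∈ℕ} be an infinite sequence of terms with t_i ⊸ t_{i+1} for all i, and suppose that for every i there exists k_i such that |t_i|_h > |t_{i+1}|_h for all h ≥ k_i, and that |t_i|_h is monotone nondecreasing in h with the property that once a run is successful its length stabilizes. Then for no k is the run from (t₀, ⟨·⟩, ε, •^k, ↓) successful (i.e., ⟦t₀⟧_k is never a success value). -/
/-- strict decrease implies divergence detection. In the
abstract quantitative setting, `f i h ∈ ℕ∪{∞}` is the run length `|t_i|_h` of
the λ-IAM on the `i`-th term of an infinite `⊸`-sequence at input depth `h`,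
and `succ i h` says that the run from `(t_i, ⟨·⟩, ε, •^h, ↓)` is successful.
If run lengths strictly decrease along the sequence for sufficiently deep
inputs, are monotone nondecreasing in the depth, and successful runs are
finite and their length stabilizes, then no run on `t₀` is successful. -/
theorem no_success_on_divergent (f : ℕ → ℕ → ℕ∞) (succ : ℕ → ℕ → Prop)
    (hdec : ∀ i : ℕ, ∃ k : ℕ, ∀ h : ℕ, k ≤ h → f (i + 1) h < f i h)
    (hmono : ∀ i k k' : ℕ, k ≤ k' → f i k ≤ f i k')
    (hfin : ∀ i k : ℕ, succ i k → f i k ≠ ⊤)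
    (hstab : ∀ i k h : ℕ, succ i k → k ≤ h → f i h = f i k) :
    ∀ k : ℕ, ¬ succ 0 k := by
  intro k hsucc
  choose g hg using hdec
  set n : ℕ := (f 0 k).toNat with hn
  have hfk : f 0 k = (n : ℕ∞) := (ENat.coe_toNat (hfin 0 k hsucc)).symm
  set H : ℕ := max k ((Finset.range (n + 2)).sup g) with hH
  have hdecH : ∀ i < n + 1, f (i + 1) H < f i H := by
    intro i hi
    apply hg
    exact le_trans (Finset.le_sup (Finset.mem_range.mpr (by omega)))
      (le_max_right _ _)
  have key : ∀ j ≤ n + 1, f j H + (j : ℕ∞) ≤ f 0 H := by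
    intro j hj
    induction j with
    | zero => simp
    | succ m ih =>
      have h1 : f (m + 1) H + 1 ≤ f m H :=
        Order.add_one_le_of_lt (hdecH m (by omega))
      calc f (m + 1) H + ((m + 1 : ℕ) : ℕ∞)
          = (f (m + 1) H + 1) + (m : ℕ∞) := by
            push_cast; ring
        _ ≤ f m H + (m : ℕ∞) := by gcongr
        _ ≤ f 0 H := ih (by omega)
  have hstabH : f 0 H = f 0 k := hstab 0 k H hsucc (le_max_left _ _)
  have h2 := key (n + 1) le_rfl
  rw [hstabH, hfk] at h2
  have h3 : ((n : ℕ∞) + 1) ≤ (n : ℕ∞) :=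
    le_trans (by simp [add_comm]) h2
  simp [ENat.add_one_le_iff] at h3
end
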